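/- arXiv:2005.01342 — 2 statements merged into one kernel-verified Lean document; each statement's English description precedes it below -/
import Mathlib

section
/- Let 𝒜 be a trim ℕ-automaton without heavy cycles, and for i ≥ 0 let S_i be the set of states of height i in its barbell graph 𝔊. Then for every i there exist constants B_i, C_i ≥ 0 such that for all states q,q' of height at most i and all words w ∈ A*, μ(w)(q,q') ≤ B_i·|w|^i + C_i. -/
set_option autoImplicit false

/-! ### Asymptotic growth of functions `A* → ℕ` -/

/-- `g` has `k`-polynomial growth: `g(w) = O(|w|^k)` and there is an infinite set `L`
of words on which `g(w) = Ω(|w|^k)`. -/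
def PolyGrowth {A : Type} (g : List A → ℕ) (k : ℕ) : Prop :=
  (∃ C : ℕ, ∀ w, g w ≤ C * w.length ^ k + C) ∧
  (∃ L : Set (List A), L.Infinite ∧ ∃ c : ℕ, 0 < c ∧ ∀ w ∈ L, w.length ^ k ≤ c * g w)

/-- `g` has exponential growth: `g(w) = 2^{O(|w|)}` and there is an infinite set `L`
of words on which `g(w) = 2^{Ω(|w|)}`. -/
def ExpGrowth {A : Type} (g : List A → ℕ) : Prop :=
  (∃ C : ℕ, ∀ w, g w ≤ 2 ^ (C * w.length + C)) ∧
  (∃ L : Set (List A), L.Infinite ∧ ∃ c : ℕ, 0 < c ∧ ∀ w ∈ L, 2 ^ w.length ≤ (g w) ^ c)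

/-! ### Substitutions -/

/-- Extension of a substitution `s : X → (B ⊎ X)*` to a morphism on `(B ⊎ X)*`
fixing the letters of `B`; this also gives the composition of substitutions,
`(s₁ ∘ s₂) x = applySubst s₁ (s₂ x)`. -/
def applySubst {B X : Type} (s : X → List (B ⊕ X)) (l : List (B ⊕ X)) : List (B ⊕ X) :=
  l.flatMap (fun c => match c with | Sum.inl b => [Sum.inl b] | Sum.inr x => s x)

/-- Evaluation of a word over `B ⊎ X` under a valuation `v : X → B*` of the registers. -/
def evalSubst {B X : Type} (v : X → List B) (l : List (B ⊕ X)) : List B :=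
  l.flatMap (fun c => match c with | Sum.inl b => [b] | Sum.inr x => v x)

/-- Number of occurrences of register `x` in a word over `B ⊎ X`. -/
noncomputable def occCount {B X : Type} (x : X) (l : List (B ⊕ X)) : ℕ :=
  l.countP (fun c => @decide (c = Sum.inr x) (Classical.propDecidable _))

/-- Total number of occurrences of register `x` in the whole set of words `{s y | y ∈ X}`. -/
noncomputable def totalOcc {B X : Type} [Fintype X] (s : X → List (B ⊕ X)) (x : X) : ℕ :=
  ∑ y : X, occCount x (s y)

/-! ### Streaming string transducers -/

/-- A streaming string transducer (SST) with input alphabet `A` and output alphabet `B`: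
finitely many states `Q` with initial state `q0`, finitely many registers `X` with
initial contents `init`, a partial transition/update function (`trans`, returning the
successor state together with the register update substitution, with a common domain),
and a partial output function `out`. -/
structure SST (A B : Type) where
  Q : Type
  X : Type
  [finQ : Fintype Q]
  [finX : Fintype X]
  q0 : Q
  init : X → List B
  trans : Q → A → Option (Q × (X → List (B ⊕ X)))
  out : Q → Option (List (B ⊕ X))

attribute [instance] SST.finQ SST.finX

/-- Run of an SST from state `q` with current register valuation `v`. -/
def SST.runFrom {A B : Type} (T : SST A B) :
    T.Q → (T.X → List B) → List A → Option (T.Q × (T.X → List B))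
  | q, v, [] => some (q, v)
  | q, v, a :: w =>
    match T.trans q a with
    | none => none
    | some (q', s) => T.runFrom q' (fun x => evalSubst v (s x)) w

/-- The (partial) function computed by an SST. -/
def SST.eval {A B : Type} (T : SST A B) (w : List A) : Option (List B) :=
  (T.runFrom T.q0 T.init w).bind fun p => (T.out p.1).map fun o => evalSubst p.2 o

def SST.Computes {A B : Type} (T : SST A B) (f : List A → Option (List B)) : Prop :=
  ∀ w, T.eval w = f w

/-- An SST is copyless if every update substitution uses each register at most once
in total. -/
def SST.Copyless {A B : Type} (T : SST A B) : Prop :=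
  ∀ q a p, T.trans q a = some p → ∀ x : T.X, totalOcc p.2 x ≤ 1

/-- An SST is `k`-layered if its registers can be partitioned into layers
`X_0, …, X_k` such that every update of a register of layer `i` only uses registers
of layers `≤ i`, and each register of layer `i` is used at most once in total in the
updates of the registers of layer `i`. -/
def SST.IsLayered {A B : Type} (T : SST A B) (k : ℕ) : Prop :=
  ∃ layer : T.X → Fin (k + 1),
    ∀ q a p, T.trans q a = some p →
      (∀ x y, Sum.inr y ∈ p.2 x → layer y ≤ layer x) ∧
      (∀ y : T.X,
        (∑ x ∈ Finset.univ.filter (fun x => layer x = layer y), occCount y (p.2 x)) ≤ 1)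

/-- The composed substitution `λ(q, w)` applied along the run reading `w` from state `q`
(together with the state reached). -/
def SST.substFrom {A B : Type} (T : SST A B) :
    T.Q → List A → Option (T.Q × (T.X → List (B ⊕ T.X)))
  | q, [] => some (q, fun x => [Sum.inr x])
  | q, a :: w =>
    match T.trans q a with
    | none => none
    | some (q', s) => (T.substFrom q' w).map fun p => (p.1, fun x => applySubst s (p.2 x))

/-- An SST is `(k,B)`-bounded if its registers can be partitioned into layers
`X_0, …, X_k` such that every update of a register of layer `i` only uses registers of
layers `≤ i`, and for every state `q` and word `w`, each register of layer `i` occurs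
at most `B` times in total in `{λ(q,w)(x) | x ∈ X_i}`. -/
def SST.IsBounded {A B : Type} (T : SST A B) (k Bd : ℕ) : Prop :=
  ∃ layer : T.X → Fin (k + 1),
    (∀ q a p, T.trans q a = some p → ∀ x y, Sum.inr y ∈ p.2 x → layer y ≤ layer x) ∧
    (∀ q w p, T.substFrom q w = some p →
      ∀ y : T.X,
        (∑ x ∈ Finset.univ.filter (fun x => layer x = layer y), occCount y (p.2 x)) ≤ Bd)

/-! ### Simple SSTs -/

/-- A simple SST: total, a single state (hence no state component), and update
substitutions and output using no letters of `B`. -/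
structure SimpleSST (A B : Type) where
  X : Type
  [finX : Fintype X]
  [decX : DecidableEq X]
  init : X → List B
  upd : A → X → List X
  out : List X

attribute [instance] SimpleSST.finX SimpleSST.decX

/-- Register valuation of a simple SST after reading a word, starting from valuation `v`. -/
def SimpleSST.valFrom {A B : Type} (T : SimpleSST A B) :
    (T.X → List B) → List A → T.X → List B
  | v, [] => v
  | v, a :: w => T.valFrom (fun x => (T.upd a x).flatMap v) w

/-- Register valuation `𝒯^w` of a simple SST after reading `w`. -/
def SimpleSST.val {A B : Type} (T : SimpleSST A B) (w : List A) : T.X → List B :=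
  T.valFrom T.init w

/-- The (total) function computed by a simple SST. -/
def SimpleSST.eval {A B : Type} (T : SimpleSST A B) (w : List A) : List B :=
  (T.out).flatMap (T.val w)

/-! ### Two-way transducers -/

/-- A tape symbol: a letter of `A` or one of the two endmarkers `⊢`, `⊣`. -/
inductive TapeSym (A : Type) where
  | lend
  | rend
  | letter (a : A)

/-- The content of the tape `⊢w⊣` at position `m ∈ {0, …, |w|+1}`. -/
def tapeAt {A : Type} (w : List A) (m : ℕ) : TapeSym A :=
  if m = 0 then TapeSym.lend
  else
    match w[m - 1]? with
    | some a => TapeSym.letter a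
    | none => TapeSym.rend

/-- Head moves. -/
inductive Dir where
  | left
  | right

/-- A deterministic two-way transducer: finitely many states with an initial state and
a set of final states, and a partial transition/output function (common domain). -/
structure TwoWayT (A B : Type) where
  Q : Type
  [finQ : Fintype Q]
  q0 : Q
  final : Set Q
  trans : Q → TapeSym A → Option ((Q × Dir) × List B)

attribute [instance] TwoWayT.finQ

/-- `TwoWayT.Steps T w c v c'`: on input `⊢w⊣` the transducer can go from
configuration `c` to configuration `c'` producing output `v`. -/
inductive TwoWayT.Steps {A B : Type} (T : TwoWayT A B) (w : List A) :
    T.Q × ℕ → List B → T.Q × ℕ → Prop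
  | refl (c : T.Q × ℕ) : TwoWayT.Steps T w c [] c
  | stepL {q : T.Q} {m : ℕ} {q' : T.Q} {v u : List B} {cf : T.Q × ℕ} :
      T.trans q (tapeAt w m) = some ((q', Dir.left), v) → 1 ≤ m →
      TwoWayT.Steps T w (q', m - 1) u cf → TwoWayT.Steps T w (q, m) (v ++ u) cf
  | stepR {q : T.Q} {m : ℕ} {q' : T.Q} {v u : List B} {cf : T.Q × ℕ} :
      T.trans q (tapeAt w m) = some ((q', Dir.right), v) → m ≤ w.length →
      TwoWayT.Steps T w (q', m + 1) u cf → TwoWayT.Steps T w (q, m) (v ++ u) cf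

/-- The two-way transducer computes the partial function `f`: `f w = some v` iff there
is an accepting run on `⊢w⊣` (from `(q0, 0)` to `(q, |w|+1)` with `q` final)
producing `v`. -/
def TwoWayT.Computes {A B : Type} (T : TwoWayT A B) (f : List A → Option (List B)) : Prop :=
  ∀ w v, f w = some v ↔ ∃ q ∈ T.final, TwoWayT.Steps T w (T.q0, 0) v (q, w.length + 1)

/-! ### Marble transducers -/

/-- Actions of a marble transducer: move left, move right, lift the marble, or drop a
marble of color `c`. -/
inductive MAct (C : Type) where
  | left
  | right
  | lift
  | drop (c : C)

/-- A deterministic marble transducer: finitely many states with an initial state and a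
set of final states, finitely many marble colors `C`, and a partial transition/output
function (common domain) reading the current state, the tape symbol, and the color of
the marble at the current position (if any); on a position carrying a marble the head
may only move left or lift the marble. -/
structure MarbleT (A B : Type) where
  Q : Type
  C : Type
  [finQ : Fintype Q]
  [finC : Fintype C]
  q0 : Q
  final : Set Q
  trans : Q → TapeSym A → Option C → Option ((Q × MAct C) × List B)
  marble_left_or_lift : ∀ q s c p, trans q s (some c) = some p →
    p.1.2 = MAct.left ∨ p.1.2 = MAct.lift

attribute [instance] MarbleT.finQ MarbleT.finC

/-- The color of the marble at position `m`, for a stack `π` of dropped marbles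
(topmost first, positions strictly increasing from the top and all ≥ the head
position). -/
def marbleAt {C : Type} (m : ℕ) : List (C × ℕ) → Option C
  | [] => none
  | (c, p) :: _ => if p = m then some c else none

/-- `MarbleT.Steps T w c v c'`: on input `⊢w⊣` the marble transducer can go from
configuration `c` to configuration `c'` producing output `v`. A configuration is a
triple (state, head position, stack of dropped marbles). -/
inductive MarbleT.Steps {A B : Type} (T : MarbleT A B) (w : List A) :
    T.Q × ℕ × List (T.C × ℕ) → List B → T.Q × ℕ × List (T.C × ℕ) → Prop
  | refl (c : T.Q × ℕ × List (T.C × ℕ)) : MarbleT.Steps T w c [] c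
  | stepL {q : T.Q} {m : ℕ} {π : List (T.C × ℕ)} {q' : T.Q} {v u : List B}
      {cf : T.Q × ℕ × List (T.C × ℕ)} :
      T.trans q (tapeAt w m) (marbleAt m π) = some ((q', MAct.left), v) → 1 ≤ m →
      MarbleT.Steps T w (q', m - 1, π) u cf → MarbleT.Steps T w (q, m, π) (v ++ u) cf
  | stepR {q : T.Q} {m : ℕ} {π : List (T.C × ℕ)} {q' : T.Q} {v u : List B}
      {cf : T.Q × ℕ × List (T.C × ℕ)} :
      marbleAt m π = none →
      T.trans q (tapeAt w m) none = some ((q', MAct.right), v) → m ≤ w.length →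
      MarbleT.Steps T w (q', m + 1, π) u cf → MarbleT.Steps T w (q, m, π) (v ++ u) cf
  | stepLift {q : T.Q} {m : ℕ} {π : List (T.C × ℕ)} {q' : T.Q} {cc : T.C} {v u : List B}
      {cf : T.Q × ℕ × List (T.C × ℕ)} :
      T.trans q (tapeAt w m) (some cc) = some ((q', MAct.lift), v) →
      MarbleT.Steps T w (q', m, π) u cf →
      MarbleT.Steps T w (q, m, (cc, m) :: π) (v ++ u) cf
  | stepDrop {q : T.Q} {m : ℕ} {π : List (T.C × ℕ)} {q' : T.Q} {cc : T.C} {v u : List B}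
      {cf : T.Q × ℕ × List (T.C × ℕ)} :
      marbleAt m π = none →
      T.trans q (tapeAt w m) none = some ((q', MAct.drop cc), v) →
      MarbleT.Steps T w (q', m, (cc, m) :: π) u cf →
      MarbleT.Steps T w (q, m, π) (v ++ u) cf

/-- The marble transducer computes the partial function `f`: `f w = some v` iff there is
an accepting run on `⊢w⊣` (from `(q0, 0, ε)` to `(q, |w|+1, ε)` with `q` final)
producing `v`. -/
def MarbleT.Computes {A B : Type} (T : MarbleT A B) (f : List A → Option (List B)) : Prop :=
  ∀ w v, f w = some v ↔
    ∃ q ∈ T.final, MarbleT.Steps T w (T.q0, 0, []) v (q, w.length + 1, [])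

/-- A `k`-marble transducer: every configuration reachable from the initial
configuration carries at most `k` marbles. -/
def MarbleT.IsKMarble {A B : Type} (T : MarbleT A B) (k : ℕ) : Prop :=
  ∀ (w : List A) (u : List B) (cfg : T.Q × ℕ × List (T.C × ℕ)),
    MarbleT.Steps T w (T.q0, 0, []) u cfg → cfg.2.2.length ≤ k

/-- `f` is computable by a `k`-marble transducer. -/
def ComputableKMarble {A B : Type} (f : List A → List B) (k : ℕ) : Prop :=
  ∃ T : MarbleT A B, T.IsKMarble k ∧ T.Computes (fun w => some (f w))

/-! ### Matrices over ℕ and ℕ-automata -/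

/-- Product of two square matrices over `ℕ` (given as functions). -/
def matMul {Q : Type} [Fintype Q] (M N : Q → Q → ℕ) : Q → Q → ℕ :=
  fun i j => ∑ x : Q, M i x * N x j

/-- Identity matrix over `ℕ`. -/
def matId {Q : Type} [DecidableEq Q] : Q → Q → ℕ :=
  fun i j => if i = j then 1 else 0

/-- Row vector times matrix. -/
def vecMat {Q : Type} [Fintype Q] (v : Q → ℕ) (M : Q → Q → ℕ) : Q → ℕ :=
  fun j => ∑ x : Q, v x * M x j

/-- Matrix times column vector. -/
def matVec {Q : Type} [Fintype Q] (M : Q → Q → ℕ) (v : Q → ℕ) : Q → ℕ :=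
  fun i => ∑ x : Q, M i x * v x

/-- Dot product of two vectors over `ℕ`. -/
def dotProd {Q : Type} [Fintype Q] (v w : Q → ℕ) : ℕ :=
  ∑ x : Q, v x * w x

/-- An `ℕ`-automaton: a finite set of states `Q`, an initial row vector `α`, a weight
matrix `μ a` for every letter `a` (extended to words as a monoid morphism `μW`), and a
final column vector `β`. -/
structure NAut (A : Type) where
  Q : Type
  [finQ : Fintype Q]
  [decQ : DecidableEq Q]
  α : Q → ℕ
  μ : A → Q → Q → ℕ
  β : Q → ℕ

attribute [instance] NAut.finQ NAut.decQ

/-- The monoid morphism `A* → ℕ^{Q×Q}` extending `μ`. -/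
def NAut.μW {A : Type} (T : NAut A) : List A → T.Q → T.Q → ℕ
  | [] => matId
  | a :: w => matMul (T.μ a) (T.μW w)

/-- The total function `g : A* → ℕ` computed by the `ℕ`-automaton: `g w = α·μ(w)·β`. -/
def NAut.g {A : Type} (T : NAut A) (w : List A) : ℕ :=
  dotProd (vecMat T.α (T.μW w)) T.β

/-- Trimness: every state is accessible and co-accessible with nonzero weight. -/
def NAut.Trim {A : Type} (T : NAut A) : Prop :=
  ∀ q : T.Q, (∃ u, 1 ≤ vecMat T.α (T.μW u) q) ∧ (∃ v, 1 ≤ matVec (T.μW v) T.β q)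

/-- A heavy cycle on state `q`: a nonempty word `v` with `μ(v)(q,q) ≥ 2`. -/
def NAut.HeavyCycle {A : Type} (T : NAut A) (q : T.Q) (v : List A) : Prop :=
  v ≠ [] ∧ 2 ≤ T.μW v q q

/-- A barbell from `q` to `q' ≠ q`: a nonempty word `v` with `μ(v)(q,q) ≥ 1`,
`μ(v)(q,q') ≥ 1` and `μ(v)(q',q') ≥ 1`. -/
def NAut.Barbell {A : Type} (T : NAut A) (q q' : T.Q) (v : List A) : Prop :=
  q ≠ q' ∧ v ≠ [] ∧ 1 ≤ T.μW v q q ∧ 1 ≤ T.μW v q q' ∧ 1 ≤ T.μW v q' q'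

/-- Edge of the barbell graph `𝔊`. -/
def NAut.GEdge {A : Type} (T : NAut A) (q1 q2 : T.Q) : Prop :=
  ∃ q q' v, T.Barbell q q' v ∧ (∃ w, 1 ≤ T.μW w q1 q) ∧ (∃ w', 1 ≤ T.μW w' q' q2)

/-- `PathLen G q n`: there is a directed path of length `n` (counting edges) in the
graph `G` ending in `q`. -/
inductive PathLen {Q : Type} (G : Q → Q → Prop) : Q → ℕ → Prop
  | zero (q : Q) : PathLen G q 0
  | succ {p q : Q} {n : ℕ} : PathLen G p n → G p q → PathLen G q (n + 1)

/-- The height of `q` in the graph `G` is `n`: the maximal length of a directed path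
ending in `q` is `n`. -/
def HeightIs {Q : Type} (G : Q → Q → Prop) (q : Q) (n : ℕ) : Prop :=
  PathLen G q n ∧ ∀ m, PathLen G q m → m ≤ n

/-! ### Statement-specific predicates -/

/-- Case (1) of the trichotomy: `|f|` has exponential growth and `f` is not computable
with `k` marbles for any `k`. -/
def MarbleCase1 {A B : Type} (f : List A → List B) : Prop :=
  ExpGrowth (fun w => (f w).length) ∧ ∀ k : ℕ, ¬ ComputableKMarble f k

/-- Case (2) of the trichotomy: `|f|` has `(k+1)`-polynomial growth for some `k`, `f` is
computable with `k` marbles, and `k` is the least possible number of marbles. -/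
def MarbleCase2 {A B : Type} (f : List A → List B) : Prop :=
  ∃ k : ℕ, PolyGrowth (fun w => (f w).length) (k + 1) ∧ ComputableKMarble f k ∧
    ∀ j : ℕ, ComputableKMarble f j → k ≤ j

/-- Case (3) of the trichotomy: `|f|` has `0`-polynomial growth and `f` is computable
with `0` marbles. -/
def MarbleCase3 {A B : Type} (f : List A → List B) : Prop :=
  PolyGrowth (fun w => (f w).length) 0 ∧ ComputableKMarble f 0

/-- The second alternative of Lemma `lem:graph`: `g` has `k`-polynomial growth for some
`k ≥ 0` and the states admit a partition `S_0, …, S_k` satisfying (a), (b), (c). -/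
def NAutPolyCase {A : Type} (T : NAut A) : Prop :=
  ∃ k : ℕ, PolyGrowth T.g k ∧
    ∃ S : T.Q → Fin (k + 1),
      (∀ q q' : T.Q, (∃ w, 1 ≤ T.μW w q q') → S q ≤ S q') ∧
      (∃ Bd : ℕ, ∀ q q' : T.Q, S q = S q' → ∀ w, T.μW w q q' ≤ Bd) ∧
      (∀ q : T.Q, ∃ C : ℕ, ∀ w, vecMat T.α (T.μW w) q ≤ C * w.length ^ (S q : ℕ) + C)

def seg {A : Type} (w : List A) (t t' : ℕ) : List A := (w.drop t).take (t' - t)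


lemma ramsey_fin : ∀ n : ℕ, ∃ R : ℕ, 1 ≤ R ∧
    ∀ (f : ℕ → ℕ → Fin (n+1)) (S : Finset ℕ), R ≤ S.card →
      ∃ i ∈ S, ∃ j ∈ S, ∃ l ∈ S, i < j ∧ j < l ∧ f i j = f j l ∧ f i j = f i l := by
  intro n
  induction n with
  | zero =>
    refine ⟨3, by norm_num, fun f S hS => ?_⟩
    have h1 : S.Nonempty := Finset.card_pos.mp (by omega)
    set i := S.min' h1 with hi
    have hiS : i ∈ S := S.min'_mem h1
    have h2 : (S.erase i).Nonempty := Finset.card_pos.mp (by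
      rw [Finset.card_erase_of_mem hiS]; omega)
    set j := (S.erase i).min' h2 with hj
    have hjS' : j ∈ S.erase i := (S.erase i).min'_mem h2
    have hjS : j ∈ S := Finset.mem_of_mem_erase hjS'
    have h3 : ((S.erase i).erase j).Nonempty := Finset.card_pos.mp (by
      rw [Finset.card_erase_of_mem hjS', Finset.card_erase_of_mem hiS]; omega)
    set l := ((S.erase i).erase j).min' h3 with hl
    have hlS'' : l ∈ (S.erase i).erase j := ((S.erase i).erase j).min'_mem h3
    have hlS : l ∈ S := Finset.mem_of_mem_erase (Finset.mem_of_mem_erase hlS'')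
    refine ⟨i, hiS, j, hjS, l, hlS, ?_, ?_, ?_, ?_⟩
    · exact lt_of_le_of_ne (S.min'_le j hjS) (Ne.symm (Finset.ne_of_mem_erase hjS'))
    · exact lt_of_le_of_ne ((S.erase i).min'_le l (Finset.mem_of_mem_erase hlS''))
        (Ne.symm (Finset.ne_of_mem_erase hlS''))
    · omega
    · omega
  | succ n ih =>
    obtain ⟨R', hR1, hR'⟩ := ih
    refine ⟨(n + 2) * R' + 2, by omega, fun f S hS => ?_⟩
    have h1 : S.Nonempty := Finset.card_pos.mp (by omega)
    set v := S.min' h1 with hv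
    have hvS : v ∈ S := S.min'_mem h1
    set S' := S.erase v with hS'
    have hS'card : (n + 2) * R' < S'.card := by
      rw [hS', Finset.card_erase_of_mem hvS]; omega
    obtain ⟨γ, _, hγ⟩ := Finset.exists_lt_card_fiber_of_mul_lt_card_of_maps_to
      (s := S') (t := (Finset.univ : Finset (Fin (n+2)))) (f := fun u => f v u)
      (fun a _ => Finset.mem_univ _)
      (by rw [Finset.card_univ, Fintype.card_fin]; exact hS'card)
    set T := S'.filter (fun u => f v u = γ) with hT
    have hTS : ∀ x ∈ T, x ∈ S := fun x hx =>
      Finset.mem_of_mem_erase (Finset.mem_filter.mp hx).1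
    have hTv : ∀ x ∈ T, v < x := fun x hx =>
      lt_of_le_of_ne (S.min'_le x (hTS x hx))
        (Ne.symm (Finset.ne_of_mem_erase (Finset.mem_filter.mp hx).1))
    have hTγ : ∀ x ∈ T, f v x = γ := fun x hx => (Finset.mem_filter.mp hx).2
    by_cases hA : ∃ i ∈ T, ∃ j ∈ T, i < j ∧ f i j = γ
    · obtain ⟨i, hi, j, hj, hij, hfij⟩ := hA
      exact ⟨v, hvS, i, hTS i hi, j, hTS j hj, hTv i hi, hij, by
        rw [hTγ i hi, hfij], by rw [hTγ i hi, hTγ j hj]⟩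
    · push_neg at hA
      have hcard' : Fintype.card {c : Fin (n+2) // c ≠ γ} = n + 1 := by
        rw [Fintype.card_subtype_compl]
        simp
      set e := Fintype.equivFinOfCardEq hcard' with he
      set f' : ℕ → ℕ → Fin (n+1) := fun a b =>
        if h : f a b = γ then ⟨0, by omega⟩ else e ⟨f a b, h⟩ with hf'
      obtain ⟨i, hi, j, hj, l, hl, hij, hjl, e1, e2⟩ := hR' f' T (by omega)
      have hne : ∀ (x y : ℕ), x ∈ T → y ∈ T → x < y → f x y ≠ γ := fun x y hx hy hxy =>
        hA x hx y hy hxy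
      have key : ∀ (x y x' y' : ℕ) (hx : f x y ≠ γ) (hx' : f x' y' ≠ γ),
          f' x y = f' x' y' → f x y = f x' y' := by
        intro x y x' y' hx hx' hh
        rw [hf'] at hh
        simp only [dif_neg hx, dif_neg hx'] at hh
        exact congrArg Subtype.val (e.injective hh)
      exact ⟨i, hTS i hi, j, hTS j hj, l, hTS l hl, hij, hjl,
        key i j j l (hne i j hi hj hij) (hne j l hj hl hjl) e1,
        key i j i l (hne i j hi hj hij) (hne i l hi hl (lt_trans hij hjl)) e2⟩

/-- Ramsey triangle lemma for arbitrary finite color types. -/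
lemma ramsey_triangle (κ : Type) [Fintype κ] : ∃ R : ℕ, 1 ≤ R ∧
    ∀ (f : ℕ → ℕ → κ) (S : Finset ℕ), R ≤ S.card →
      ∃ i ∈ S, ∃ j ∈ S, ∃ l ∈ S, i < j ∧ j < l ∧ f i j = f j l ∧ f i j = f i l := by
  obtain ⟨R, hR1, hR⟩ := ramsey_fin (Fintype.card κ)
  refine ⟨R, hR1, fun f S hS => ?_⟩
  set g : κ → Fin (Fintype.card κ + 1) :=
    fun c => Fin.castLE (by omega) (Fintype.equivFin κ c) with hg
  have hginj : Function.Injective g := fun a b hab => by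
    apply (Fintype.equivFin κ).injective
    exact Fin.castLE_injective _ hab
  obtain ⟨i, hi, j, hj, l, hl, hij, hjl, e1, e2⟩ := hR (fun a b => g (f a b)) S hS
  exact ⟨i, hi, j, hj, l, hl, hij, hjl, hginj e1, hginj e2⟩


lemma chain_lemma {Q : Type} [Fintype Q] (P : Q → Q → Prop) (S : Q → Prop)
    (htrans : ∀ a b c, P a b → P b c → P a c)
    (hstep : ∀ y, S y → ∃ y', S y' ∧ P y' y)
    {x : Q} (hx : S x) : ∃ g, S g ∧ P g g ∧ P g x := by
  classical
  set F : {y : Q // S y} → {y : Q // S y} :=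
    fun y => ⟨(hstep y.1 y.2).choose, (hstep y.1 y.2).choose_spec.1⟩ with hF
  have hFP : ∀ y : {y : Q // S y}, P (F y).1 y.1 := fun y => (hstep y.1 y.2).choose_spec.2
  have hchain : ∀ (k : ℕ) (y : {y : Q // S y}), P (F^[k+1] y).1 y.1 := by
    intro k
    induction k with
    | zero => intro y; simpa using hFP y
    | succ k ih =>
      intro y
      have h1 : P (F^[k+1] (F y)).1 (F y).1 := ih (F y)
      have h2 : F^[k+1+1] y = F^[k+1] (F y) := by
        rw [Function.iterate_succ_apply]
      rw [h2]
      exact htrans _ _ _ h1 (hFP y)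
  set z : {y : Q // S y} := ⟨x, hx⟩ with hz
  obtain ⟨α, β, hne, heq⟩ := Fintype.exists_ne_map_eq_of_card_lt
    (fun k : Fin (Fintype.card Q + 1) => (F^[(k : ℕ)] z).1) (by simp)
  wlog hlt : (α : ℕ) < (β : ℕ) generalizing α β
  · exact this β α (Ne.symm hne) heq.symm (by
      rcases Nat.lt_or_ge (α : ℕ) (β : ℕ) with h | h
      · exact absurd h hlt
      · rcases Nat.lt_or_ge (β : ℕ) (α : ℕ) with h' | h'
        · exact h'
        · exact absurd (Fin.ext (le_antisymm h' h)) hne)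
  have hsub : F^[(β : ℕ)] z = F^[(α : ℕ)] z := Subtype.ext heq.symm
  refine ⟨(F^[(β : ℕ)] z).1, (F^[(β : ℕ)] z).2, ?_, ?_⟩
  · have h3 : (β : ℕ) = ((β : ℕ) - (α : ℕ) - 1) + 1 + (α : ℕ) := by omega
    have h4 : F^[(β : ℕ)] z = F^[((β : ℕ) - (α : ℕ) - 1) + 1] (F^[(α : ℕ)] z) := by
      rw [← Function.iterate_add_apply, ← h3]
    have := hchain ((β : ℕ) - (α : ℕ) - 1) (F^[(α : ℕ)] z)
    rw [← h4, hsub] at this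
    rw [hsub]
    exact this
  · have h3 : (β : ℕ) = ((β : ℕ) - 1) + 1 := by omega
    have := hchain ((β : ℕ) - 1) z
    rw [← h3] at this
    rw [hsub] at this ⊢
    rw [← hsub] at this ⊢
    exact this

/- ### basic lemmas -/

namespace NAut

variable {A : Type} (T : NAut A)

lemma matMul_assoc {Q : Type} [Fintype Q] (M N P : Q → Q → ℕ) :
    matMul (matMul M N) P = matMul M (matMul N P) := by
  funext i j
  simp only [matMul, Finset.sum_mul, Finset.mul_sum]
  rw [Finset.sum_comm]
  congr 1; funext x; congr 1; funext y; ring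

lemma matId_mul {Q : Type} [Fintype Q] [DecidableEq Q] (M : Q → Q → ℕ) :
    matMul matId M = M := by
  funext i j
  simp [matMul, matId, ite_mul, Finset.sum_ite_eq]

lemma mul_matId {Q : Type} [Fintype Q] [DecidableEq Q] (M : Q → Q → ℕ) :
    matMul M matId = M := by
  funext i j
  simp [matMul, matId, mul_ite, Finset.sum_ite_eq']

lemma μW_append (u v : List A) : T.μW (u ++ v) = matMul (T.μW u) (T.μW v) := by
  induction u with
  | nil => simp [μW, matId_mul]
  | cons a u ih => simp [μW, ih, matMul_assoc]

lemma μW_single (a : A) : T.μW [a] = T.μ a := by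
  simp [μW, mul_matId]

lemma le_μW_append (u v : List A) (p x r : T.Q) :
    T.μW u p x * T.μW v x r ≤ T.μW (u ++ v) p r := by
  rw [μW_append]
  exact Finset.single_le_sum (f := fun y => T.μW u p y * T.μW v y r)
    (fun _ _ => Nat.zero_le _) (Finset.mem_univ x)

lemma exists_of_pos {u v : List A} {p r : T.Q} (h : 1 ≤ T.μW (u ++ v) p r) :
    ∃ x, 1 ≤ T.μW u p x ∧ 1 ≤ T.μW v x r := by
  rw [μW_append] at h
  by_contra hc
  push_neg at hc
  have hz : ∀ x ∈ (Finset.univ : Finset T.Q), T.μW u p x * T.μW v x r = 0 := by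
    intro x _
    rcases Nat.eq_zero_or_pos (T.μW u p x) with h1 | h1
    · simp [h1]
    · have := hc x h1
      have : T.μW v x r = 0 := Nat.lt_one_iff.mp this
      simp [this]
  have : matMul (T.μW u) (T.μW v) p r = 0 := Finset.sum_eq_zero hz
  omega


/-- Reachability with positive weight. -/
def Reach (p q : T.Q) : Prop := ∃ v, 1 ≤ T.μW v p q

lemma reach_refl (p : T.Q) : T.Reach p p := ⟨[], by simp [μW, matId]⟩

lemma reach_trans {p q r : T.Q} (h1 : T.Reach p q) (h2 : T.Reach q r) : T.Reach p r := by
  obtain ⟨u, hu⟩ := h1; obtain ⟨v, hv⟩ := h2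
  exact ⟨u ++ v, le_trans (Nat.one_le_iff_ne_zero.mpr (by positivity))
    (T.le_μW_append u v p q r)⟩

/-- Fact 1: entries pointing back into a co-reachable state are at most 1. -/
lemma entry_le_one (hnc : ¬ ∃ q v, T.HeavyCycle q v) {p q' : T.Q} (hr : T.Reach q' p) (v : List A) :
    T.μW v p q' ≤ 1 := by
  by_contra hc
  push_neg at hc
  obtain ⟨v', hv'⟩ := hr
  have hne : v ++ v' ≠ [] := by
    intro he
    rcases List.append_eq_nil_iff.mp he with ⟨h1, h2⟩
    subst h1; subst h2
    simp only [μW, matId] at hc hv'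
    split at hc
    · omega
    · omega
  have h2 : 2 ≤ T.μW (v ++ v') p p := by
    calc (2:ℕ) ≤ T.μW v p q' * T.μW v' q' p := by
          have := Nat.mul_le_mul hc hv'; simpa using this
    _ ≤ _ := T.le_μW_append v v' p q' p
  exact hnc ⟨p, v ++ v', hne, h2⟩

lemma diag_le_one (hnc : ¬ ∃ q v, T.HeavyCycle q v) (p : T.Q) (v : List A) : T.μW v p p ≤ 1 :=
  T.entry_le_one hnc (T.reach_refl p) v

/-- Bound on single-letter entries. -/
noncomputable def Kb [Fintype A] : ℕ :=
  1 + (Finset.univ : Finset (A × T.Q × T.Q)).sup (fun x => T.μ x.1 x.2.1 x.2.2)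

lemma one_le_Kb [Fintype A] : 1 ≤ T.Kb := Nat.le_add_right 1 _

lemma short_le_Kb [Fintype A] (y : List A) (hy : y.length ≤ 1) (r r' : T.Q) :
    T.μW y r r' ≤ T.Kb := by
  match y, hy with
  | [], _ =>
    simp only [μW, matId]
    split <;> simp [Kb]
  | [a], _ =>
    rw [μW_single]
    exact le_trans (Finset.le_sup (f := fun x : A × T.Q × T.Q => T.μ x.1 x.2.1 x.2.2)
      (Finset.mem_univ (a, r, r'))) (Nat.le_add_left _ 1)

/- ### segments -/

lemma take_eq_take_append_seg (w : List A) {t t' : ℕ} (h : t ≤ t') :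
    w.take t' = w.take t ++ seg w t t' := by
  conv_lhs => rw [show t' = t + (t' - t) by omega]
  rw [List.take_add]; rfl

lemma drop_eq_seg_append_drop (w : List A) {t t' : ℕ} (h : t ≤ t') :
    w.drop t = seg w t t' ++ w.drop t' := by
  have h2 : w.drop t' = (w.drop t).drop (t' - t) := by
    rw [List.drop_drop]; congr 1; omega
  rw [h2, seg, List.take_append_drop]

lemma seg_append_seg (w : List A) {t t' t'' : ℕ} (h1 : t ≤ t') (h2 : t' ≤ t'') :
    seg w t t'' = seg w t t' ++ seg w t' t'' := by
  have e : t'' - t = (t' - t) + (t'' - t') := by omega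
  simp only [seg, e, List.take_add, List.drop_drop]
  congr 3
  omega

lemma seg_length_le_one (w : List A) (t : ℕ) : (seg w t (t+1)).length ≤ 1 := by
  simp only [seg]
  have : t + 1 - t = 1 := by omega
  rw [this]
  exact le_trans (List.length_take_le _ _) (le_refl 1)

lemma seg_ne_nil (w : List A) {t t' : ℕ} (h1 : t < t') (h2 : t' ≤ w.length) :
    seg w t t' ≠ [] := by
  have hl : (seg w t t').length = min (t' - t) (w.length - t) := by
    simp [seg]
  intro he
  rw [he] at hl
  simp at hl
  omega

/- ### GEdge / PathLen transfer -/

lemma gedge_of_reach {x y z : T.Q} (h : T.GEdge x y) (hr : T.Reach y z) : T.GEdge x z := by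
  obtain ⟨r, r', v, hb, h1, h2⟩ := h
  exact ⟨r, r', v, hb, h1, T.reach_trans h2 hr⟩

lemma pathlen_of_reach {x y : T.Q} {n : ℕ} (h : PathLen T.GEdge x n) (hr : T.Reach x y) :
    PathLen T.GEdge y n := by
  cases h with
  | zero => exact PathLen.zero y
  | succ hp he => exact PathLen.succ hp (T.gedge_of_reach he hr)

lemma gedge_of_barbell {x y r r' : T.Q} {v : List A} (h1 : T.Reach x r)
    (hb : T.Barbell r r' v) (h2 : T.Reach r' y) : T.GEdge x y :=
  ⟨r, r', v, hb, h1, h2⟩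


open Finset in
lemma first_entry (C : T.Q → Prop) [DecidablePred C] :
    ∀ (w : List A) (q : T.Q) (q' : T.Q), ¬ C q → C q' →
    T.μW w q q' ≤ ∑ t ∈ Finset.range w.length, ∑ r : T.Q, ∑ r' : T.Q,
      (if ¬ C r ∧ C r' then T.μW (w.take t) q r *
        (T.μW (seg w t (t+1)) r r' * T.μW (w.drop (t+1)) r' q') else 0) := by
  intro w
  induction w with
  | nil =>
    intro q q' hq hq'
    have hne : q ≠ q' := fun he => hq (he ▸ hq')
    simp [μW, matId, hne]
  | cons a v ih =>
    intro q q' hq hq'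
    have hLHS : T.μW (a :: v) q q' = ∑ x : T.Q, T.μ a q x * T.μW v x q' := rfl
    rw [hLHS, ← Finset.sum_filter_add_sum_filter_not Finset.univ C
      (fun x => T.μ a q x * T.μW v x q')]
    rw [List.length_cons, Finset.sum_range_succ']
    have hseg0 : seg (a :: v) 0 1 = [a] := by simp [seg]
    -- term t = 0 equals the sum over C-states
    have hzero : (∑ r : T.Q, ∑ r' : T.Q,
        (if ¬ C r ∧ C r' then T.μW ((a :: v).take 0) q r *
          (T.μW (seg (a :: v) 0 1) r r' * T.μW ((a :: v).drop 1) r' q') else 0))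
        = ∑ x ∈ Finset.univ.filter (fun x => C x), T.μ a q x * T.μW v x q' := by
      rw [Finset.sum_eq_single q]
      · rw [Finset.sum_filter]
        congr 1
        funext r'
        by_cases hr' : C r'
        · simp only [hq, hr', not_false_iff, and_true, if_true, true_and]
          rw [hseg0, T.μW_single]
          simp [μW, matId]
        · simp [hr']
      · intro r _ hrq
        apply Finset.sum_eq_zero
        intro r' _
        have : T.μW ((a :: v).take 0) q r = 0 := by
          simp [μW, matId, (Ne.symm hrq)]
        split
        · rw [this, zero_mul]
        · rfl
      · intro h
        exact absurd (Finset.mem_univ q) h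
    rw [hzero]
    -- the non-C part is bounded by the terms t ≥ 1
    have hrest : ∑ x ∈ Finset.univ.filter (fun x => ¬ C x), T.μ a q x * T.μW v x q'
        ≤ ∑ t ∈ Finset.range v.length, ∑ r : T.Q, ∑ r' : T.Q,
          (if ¬ C r ∧ C r' then T.μW ((a :: v).take (t+1)) q r *
            (T.μW (seg (a :: v) (t+1) (t+1+1)) r r' * T.μW ((a :: v).drop (t+1+1)) r' q')
            else 0) := by
      have hsegshift : ∀ t : ℕ, seg (a :: v) (t+1) (t+1+1) = seg v t (t+1) := by
        intro t; simp [seg]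
      have hdropshift : ∀ t : ℕ, (a :: v).drop (t+1+1) = v.drop (t+1) := by
        intro t; rfl
      have htakeshift : ∀ t : ℕ, (a :: v).take (t+1) = a :: v.take t := by
        intro t; rfl
      calc ∑ x ∈ Finset.univ.filter (fun x => ¬ C x), T.μ a q x * T.μW v x q'
          ≤ ∑ x ∈ Finset.univ.filter (fun x => ¬ C x), T.μ a q x *
            (∑ t ∈ Finset.range v.length, ∑ r : T.Q, ∑ r' : T.Q,
              (if ¬ C r ∧ C r' then T.μW (v.take t) x r *
                (T.μW (seg v t (t+1)) r r' * T.μW (v.drop (t+1)) r' q') else 0)) := by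
            apply Finset.sum_le_sum
            intro x hx
            exact Nat.mul_le_mul_left _ (ih x q' (Finset.mem_filter.mp hx).2 hq')
        _ = ∑ t ∈ Finset.range v.length, ∑ r : T.Q, ∑ r' : T.Q,
            (∑ x ∈ Finset.univ.filter (fun x => ¬ C x),
              (if ¬ C r ∧ C r' then (T.μ a q x * T.μW (v.take t) x r) *
                (T.μW (seg v t (t+1)) r r' * T.μW (v.drop (t+1)) r' q') else 0)) := by
            simp only [Finset.mul_sum]
            rw [Finset.sum_comm]
            apply Finset.sum_congr rfl
            intro t _
            rw [Finset.sum_comm]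
            apply Finset.sum_congr rfl
            intro r _
            rw [Finset.sum_comm]
            apply Finset.sum_congr rfl
            intro r' _
            apply Finset.sum_congr rfl
            intro x _
            split
            · ring
            · exact mul_zero _
        _ ≤ ∑ t ∈ Finset.range v.length, ∑ r : T.Q, ∑ r' : T.Q,
            (if ¬ C r ∧ C r' then T.μW ((a :: v).take (t+1)) q r *
              (T.μW (seg (a :: v) (t+1) (t+1+1)) r r' * T.μW ((a :: v).drop (t+1+1)) r' q')
              else 0) := by
            apply Finset.sum_le_sum
            intro t _
            apply Finset.sum_le_sum
            intro r _
            apply Finset.sum_le_sum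
            intro r' _
            rw [hsegshift, hdropshift, htakeshift]
            split
            · rw [← Finset.sum_mul]
              apply Nat.mul_le_mul_right
              calc ∑ x ∈ Finset.univ.filter (fun x => ¬ C x), T.μ a q x * T.μW (v.take t) x r
                  ≤ ∑ x : T.Q, T.μ a q x * T.μW (v.take t) x r :=
                    Finset.sum_le_sum_of_subset (Finset.filter_subset _ _)
                _ = T.μW (a :: v.take t) q r := rfl
            · simp
    omega


/-- A crossing at time `t`: a first entry into the class `C` of `q'` at position `t`,
on some weighted path from `p` to `q'`. -/
def CrossAt (p q' : T.Q) (w : List A) (t : ℕ) : Prop :=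
  ∃ r', (T.Reach r' q' ∧ T.Reach q' r') ∧ 1 ≤ T.μW (w.drop (t+1)) r' q' ∧
    ∃ r, ¬ (T.Reach r q' ∧ T.Reach q' r) ∧ 1 ≤ T.μW (w.take t) p r ∧
      1 ≤ T.μW (seg w t (t+1)) r r'

/-- Key extraction: without barbells between `p` and `q'`, the number of crossing
times is bounded by a constant. -/
lemma crossing_bound {p q' : T.Q}
    (hnb : ∀ r r' v, T.Reach p r → T.Reach r' q' → ¬ T.Barbell r r' v)
    (w : List A) (Ram : ℕ) (hRam1 : 1 ≤ Ram)
    (hRam : ∀ (f : ℕ → ℕ → (T.Q → T.Q → Bool)) (S : Finset ℕ), Ram ≤ S.card →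
      ∃ i ∈ S, ∃ j ∈ S, ∃ l ∈ S, i < j ∧ j < l ∧ f i j = f j l ∧ f i j = f i l)
    (X : Finset ℕ) (hX : ∀ t ∈ X, t < w.length ∧ T.CrossAt p q' w t) :
    X.card ≤ Fintype.card (T.Q × (T.Q → T.Q → Bool) × (T.Q → T.Q → Bool)) * (Ram - 1) := by
  classical
  by_contra hc
  push_neg at hc
  -- the color of a crossing time
  set pmat : ℕ → (T.Q → T.Q → Bool) := fun k => fun u v => decide (1 ≤ T.μW (w.take k) u v)
    with hpmat
  set smat : ℕ → (T.Q → T.Q → Bool) := fun k => fun u v => decide (1 ≤ T.μW (w.drop k) u v)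
    with hsmat
  set rc : ℕ → T.Q := fun t => if h : T.CrossAt p q' w t then h.choose else q' with hrc
  set χ : ℕ → T.Q × (T.Q → T.Q → Bool) × (T.Q → T.Q → Bool) :=
    fun t => (rc t, pmat (t+1), smat (t+1)) with hχ
  obtain ⟨y, -, hy⟩ := Finset.exists_lt_card_fiber_of_mul_lt_card_of_maps_to
    (s := X) (t := Finset.univ) (f := χ) (fun a _ => Finset.mem_univ _)
    (by rw [Finset.card_univ]; exact hc)
  set Y := X.filter (fun t => χ t = y) with hY
  have hYcard : Ram ≤ Y.card := by omega
  obtain ⟨i, hi, j, hj, l, hl, hij, hjl, ecp1, ecp2⟩ := hRam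
    (fun t t' => fun u v => decide (1 ≤ T.μW (seg w (t+1) (t'+1)) u v)) Y hYcard
  have hmem : ∀ t ∈ Y, t ∈ X ∧ χ t = y := fun t ht => by
    have := Finset.mem_filter.mp ht; exact ⟨this.1, this.2⟩
  obtain ⟨hiX, hiχ⟩ := hmem i hi
  obtain ⟨hjX, hjχ⟩ := hmem j hj
  obtain ⟨hlX, hlχ⟩ := hmem l hl
  have hilen : i < w.length := (hX i hiX).1
  have hjlen : j < w.length := (hX j hjX).1
  have hicr : T.CrossAt p q' w i := (hX i hiX).2
  have hjcr : T.CrossAt p q' w j := (hX j hjX).2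
  -- the common crossing target state
  set r' : T.Q := rc i with hr'
  have hrceq : rc j = r' := by
    have hji : χ j = χ i := hjχ.trans hiχ.symm
    exact congrArg Prod.fst hji
  have hrci : rc i = hicr.choose := by rw [hrc]; simp [hicr]
  have hrcj : rc j = hjcr.choose := by rw [hrc]; simp [hjcr]
  obtain ⟨hCi, hdropi, _⟩ := hicr.choose_spec
  obtain ⟨hCj, hdropj, rj, hrjnC, hrjtake, hrjseg⟩ := hjcr.choose_spec
  rw [← hrci, ← hr'] at hCi hdropi
  rw [← hrcj, hrceq] at hCj hdropj hrjseg
  -- matrix equalities from equal colors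
  have hpeq : pmat (i+1) = pmat (j+1) := by
    have h1 := congrArg (fun z => z.2.1) hiχ
    have h2 := congrArg (fun z => z.2.1) hjχ
    exact h1.trans h2.symm
  have hseq : smat (i+1) = smat (j+1) := by
    have h1 := congrArg (fun z => z.2.2) hiχ
    have h2 := congrArg (fun z => z.2.2) hjχ
    exact h1.trans h2.symm
  have hpeq' : ∀ u v, (1 ≤ T.μW (w.take (i+1)) u v) ↔ (1 ≤ T.μW (w.take (j+1)) u v) := by
    intro u v
    have := congrFun (congrFun hpeq u) v
    simpa [hpmat, decide_eq_decide] using this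
  have hseq' : ∀ u v, (1 ≤ T.μW (w.drop (i+1)) u v) ↔ (1 ≤ T.μW (w.drop (j+1)) u v) := by
    intro u v
    have := congrFun (congrFun hseq u) v
    simpa [hsmat, decide_eq_decide] using this
  -- the idempotent segment relation
  set P : T.Q → T.Q → Prop := fun u v => 1 ≤ T.μW (seg w (i+1) (j+1)) u v with hP
  have hcp1 : ∀ u v, P u v ↔ (1 ≤ T.μW (seg w (j+1) (l+1)) u v) := by
    intro u v
    have := congrFun (congrFun ecp1 u) v
    simpa [decide_eq_decide] using this
  have hcp2 : ∀ u v, P u v ↔ (1 ≤ T.μW (seg w (i+1) (l+1)) u v) := by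
    intro u v
    have := congrFun (congrFun ecp2 u) v
    simpa [decide_eq_decide] using this
  have htrans : ∀ a b c, P a b → P b c → P a c := by
    intro a b c hab hbc
    rw [hcp2]
    rw [seg_append_seg w (by omega : i+1 ≤ j+1) (by omega : j+1 ≤ l+1)]
    calc (1:ℕ) ≤ T.μW (seg w (i+1) (j+1)) a b * T.μW (seg w (j+1) (l+1)) b c :=
          Nat.one_le_iff_ne_zero.mpr (Nat.mul_ne_zero
            (Nat.one_le_iff_ne_zero.mp hab) (Nat.one_le_iff_ne_zero.mp ((hcp1 b c).mp hbc)))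
      _ ≤ _ := T.le_μW_append _ _ _ _ _
  -- left stepping
  have hstepL : ∀ z, (1 ≤ T.μW (w.take (i+1)) p z) →
      ∃ z', (1 ≤ T.μW (w.take (i+1)) p z') ∧ P z' z := by
    intro z hz
    have hz' : 1 ≤ T.μW (w.take (j+1)) p z := (hpeq' p z).mp hz
    rw [take_eq_take_append_seg w (by omega : i+1 ≤ j+1)] at hz'
    obtain ⟨x, hx1, hx2⟩ := T.exists_of_pos hz'
    exact ⟨x, hx1, hx2⟩
  -- right stepping
  have hstepR : ∀ z, (1 ≤ T.μW (w.drop (i+1)) z q') →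
      ∃ z', (1 ≤ T.μW (w.drop (i+1)) z' q') ∧ P z z' := by
    intro z hz
    rw [drop_eq_seg_append_drop w (by omega : i+1 ≤ j+1)] at hz
    obtain ⟨x, hx1, hx2⟩ := T.exists_of_pos hz
    exact ⟨x, (hseq' x q').mpr hx2, hx1⟩
  -- the anchor state x just below the class
  have hxex : ∃ x, ¬ (T.Reach x q' ∧ T.Reach q' x) ∧
      (1 ≤ T.μW (w.take (i+1)) p x) ∧ P x r' := by
    have hij1 : i + 1 ≤ j := by omega
    have htk : w.take j = w.take (i+1) ++ seg w (i+1) j :=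
      take_eq_take_append_seg w hij1
    rw [htk] at hrjtake
    obtain ⟨x, hx1, hx2⟩ := T.exists_of_pos hrjtake
    have hPxr' : P x r' := by
      rw [hP]
      rw [seg_append_seg w hij1 (by omega : j ≤ j+1)]
      calc (1:ℕ) ≤ T.μW (seg w (i+1) j) x rj * T.μW (seg w j (j+1)) rj r' :=
            Nat.one_le_iff_ne_zero.mpr (Nat.mul_ne_zero
              (Nat.one_le_iff_ne_zero.mp hx2) (Nat.one_le_iff_ne_zero.mp hrjseg))
        _ ≤ _ := T.le_μW_append _ _ _ _ _
    refine ⟨x, ?_, hx1, hPxr'⟩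
    intro hCx
    apply hrjnC
    constructor
    · -- Reach rj q'
      exact T.reach_trans ⟨_, hrjseg⟩ (T.reach_trans hCj.1 (T.reach_refl q'))
    · -- Reach q' rj
      exact T.reach_trans hCx.2 ⟨_, hx2⟩
  obtain ⟨x, hxnC, hxtake, hxr'⟩ := hxex
  -- chains
  obtain ⟨g, hgS, hgg, hgx⟩ := chain_lemma P (fun z => 1 ≤ T.μW (w.take (i+1)) p z)
    htrans hstepL hxtake
  obtain ⟨h, hhS, hhh, hr'h⟩ := chain_lemma (fun u v => P v u)
    (fun z => 1 ≤ T.μW (w.drop (i+1)) z q')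
    (fun a b c hab hbc => htrans c b a hbc hab) hstepR hdropi
  -- assemble a barbell
  have hVne : seg w (i+1) (j+1) ≠ [] :=
    seg_ne_nil w (by omega) (by omega)
  have hReachr'q' : T.Reach r' q' := hCi.1
  have hReachpg : T.Reach p g := ⟨_, hgS⟩
  have hReachhq' : T.Reach h q' := ⟨_, hhS⟩
  by_cases hgh : g = h
  · -- degenerate case: use x and h
    have hxh : x ≠ h := by
      intro hxe
      apply hxnC
      subst hxe
      exact ⟨T.reach_trans ⟨_, hxr'⟩ hReachr'q', T.reach_trans hCi.2 ⟨_, hr'h⟩⟩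
    have hPxx : P x x := htrans _ _ _ hxr' (htrans _ _ _ hr'h (hgh ▸ hgx))
    have hPxh : P x h := htrans _ _ _ hxr' hr'h
    have hReachgx : T.Reach g x := ⟨_, hgx⟩
    exact hnb x h (seg w (i+1) (j+1)) (T.reach_trans hReachpg hReachgx)
      hReachhq' ⟨hxh, hVne, hPxx, hPxh, hhh⟩
  · have hPgh : P g h := htrans _ _ _ hgx (htrans _ _ _ hxr' hr'h)
    exact hnb g h (seg w (i+1) (j+1)) hReachpg hReachhq' ⟨hgh, hVne, hgg, hPgh, hhh⟩


/-- Recursively defined bound for the no-barbell case. -/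
def Dbound (Cr m K : ℕ) : ℕ → ℕ
  | 0 => 1
  | s+1 => Cr * (m * (m * (Dbound Cr m K s * K))) + 1

lemma one_le_Dbound (Cr m K s : ℕ) : 1 ≤ Dbound Cr m K s := by
  cases s with
  | zero => exact le_refl 1
  | succ s => exact Nat.le_add_left 1 _

lemma mu_eq_zero_of_not_reach {p q' : T.Q} (h : ¬ T.Reach p q') (w : List A) :
    T.μW w p q' = 0 := by
  by_contra hc
  exact h ⟨w, Nat.one_le_iff_ne_zero.mpr hc⟩

/-- Main bound in the absence of barbells between `p` and `q'`. -/
lemma no_barbell_bound [Fintype A] (hnc : ¬ ∃ q v, T.HeavyCycle q v)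
    (Ram : ℕ) (hRam1 : 1 ≤ Ram)
    (hRam : ∀ (f : ℕ → ℕ → (T.Q → T.Q → Bool)) (S : Finset ℕ), Ram ≤ S.card →
      ∃ i ∈ S, ∃ j ∈ S, ∃ l ∈ S, i < j ∧ j < l ∧ f i j = f j l ∧ f i j = f i l) :
    ∀ (s : ℕ) (p q' : T.Q),
      (∀ r r' v, T.Reach p r → T.Reach r' q' → ¬ T.Barbell r r' v) →
      Set.ncard {x | T.Reach p x ∧ T.Reach x q'} ≤ s →
      ∀ w, T.μW w p q' ≤ Dbound
        (Fintype.card (T.Q × (T.Q → T.Q → Bool) × (T.Q → T.Q → Bool)) * (Ram - 1))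
        (Fintype.card T.Q) T.Kb s := by
  classical
  set Cr := Fintype.card (T.Q × (T.Q → T.Q → Bool) × (T.Q → T.Q → Bool)) * (Ram - 1) with hCr
  set m := Fintype.card T.Q with hm
  set K := T.Kb with hK
  intro s
  induction s with
  | zero =>
    intro p q' hnb hcard w
    by_cases h1 : T.Reach p q'
    · exfalso
      have : q' ∈ {x | T.Reach p x ∧ T.Reach x q'} := ⟨h1, T.reach_refl q'⟩
      have hpos : 0 < Set.ncard {x | T.Reach p x ∧ T.Reach x q'} :=
        (Set.ncard_pos (Set.toFinite _)).mpr ⟨q', this⟩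
      omega
    · rw [T.mu_eq_zero_of_not_reach h1 w]
      exact Nat.zero_le _
  | succ s ih =>
    intro p q' hnb hcard w
    by_cases h1 : T.Reach p q'
    swap
    · rw [T.mu_eq_zero_of_not_reach h1 w]; exact Nat.zero_le _
    by_cases h2 : T.Reach q' p
    · exact le_trans (T.entry_le_one hnc h2 w) (one_le_Dbound _ _ _ _)
    -- main case: decompose at the first entry into the class of q'
    set C : T.Q → Prop := fun x => T.Reach x q' ∧ T.Reach q' x with hCdef
    have hpC : ¬ C p := fun hc => h2 hc.2
    have hq'C : C q' := ⟨T.reach_refl q', T.reach_refl q'⟩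
    have hdec := T.first_entry C w p q' hpC hq'C
    set X := (Finset.range w.length).filter (fun t => T.CrossAt p q' w t) with hX
    have hXprop : ∀ t ∈ X, t < w.length ∧ T.CrossAt p q' w t := by
      intro t ht
      have := Finset.mem_filter.mp ht
      exact ⟨Finset.mem_range.mp this.1, this.2⟩
    have hXcard : X.card ≤ Cr := T.crossing_bound hnb w Ram hRam1 hRam X hXprop
    set inner : ℕ → ℕ := fun t => ∑ r : T.Q, ∑ r' : T.Q,
      (if ¬ C r ∧ C r' then T.μW (w.take t) p r *
        (T.μW (seg w t (t+1)) r r' * T.μW (w.drop (t+1)) r' q') else 0) with hinner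
    have hsum : ∑ t ∈ X, inner t = ∑ t ∈ Finset.range w.length, inner t := by
      apply Finset.sum_subset (Finset.filter_subset _ _)
      intro t htr htX
      apply Finset.sum_eq_zero
      intro r _
      apply Finset.sum_eq_zero
      intro r' _
      split
      case isTrue hCond =>
        by_contra hne
        have h3 : 1 ≤ T.μW (w.take t) p r := by
          rcases Nat.eq_zero_or_pos (T.μW (w.take t) p r) with h | h
          · exact absurd (by rw [h, zero_mul]) hne
          · exact h
        have h4 : 1 ≤ T.μW (seg w t (t+1)) r r' := by
          rcases Nat.eq_zero_or_pos (T.μW (seg w t (t+1)) r r') with h | h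
          · exact absurd (by rw [h, zero_mul, mul_zero]) hne
          · exact h
        have h5 : 1 ≤ T.μW (w.drop (t+1)) r' q' := by
          rcases Nat.eq_zero_or_pos (T.μW (w.drop (t+1)) r' q') with h | h
          · exact absurd (by rw [h, mul_zero, mul_zero]) hne
          · exact h
        exact htX (Finset.mem_filter.mpr ⟨htr, ⟨r', hCond.2, h5, r, hCond.1, h3, h4⟩⟩)
      case isFalse => rfl
    have hinnerle : ∀ t ∈ X, inner t ≤ m * (m * (Dbound Cr m K s * K)) := by
      intro t _
      rw [hinner]
      calc ∑ r : T.Q, ∑ r' : T.Q, (if ¬ C r ∧ C r' then T.μW (w.take t) p r *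
            (T.μW (seg w t (t+1)) r r' * T.μW (w.drop (t+1)) r' q') else 0)
          ≤ ∑ r : T.Q, (m * (Dbound Cr m K s * K)) := by
            apply Finset.sum_le_sum
            intro r _
            calc ∑ r' : T.Q, (if ¬ C r ∧ C r' then T.μW (w.take t) p r *
                  (T.μW (seg w t (t+1)) r r' * T.μW (w.drop (t+1)) r' q') else 0)
                ≤ ∑ r' : T.Q, (Dbound Cr m K s * K) := by
                  apply Finset.sum_le_sum
                  intro r' _
                  split
                  case isFalse => exact Nat.zero_le _
                  case isTrue hCond =>
                    rcases Nat.eq_zero_or_pos (T.μW (w.take t) p r) with h3 | h3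
                    · rw [h3, zero_mul]; exact Nat.zero_le _
                    rcases Nat.eq_zero_or_pos (T.μW (seg w t (t+1)) r r') with h4 | h4
                    · rw [h4, zero_mul, mul_zero]; exact Nat.zero_le _
                    -- genuine term
                    have hRrq' : T.Reach r q' := T.reach_trans ⟨_, h4⟩ hCond.2.1
                    have hsub : {x | T.Reach p x ∧ T.Reach x r} ⊂
                        {x | T.Reach p x ∧ T.Reach x q'} := by
                      constructor
                      · intro x hx
                        exact ⟨hx.1, T.reach_trans hx.2 hRrq'⟩
                      · intro hss
                        have hq'mem : q' ∈ {x | T.Reach p x ∧ T.Reach x q'} :=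
                          ⟨h1, T.reach_refl q'⟩
                        have := hss hq'mem
                        exact hCond.1 ⟨hRrq', this.2⟩
                    have hcard' : Set.ncard {x | T.Reach p x ∧ T.Reach x r} ≤ s := by
                      have := Set.ncard_lt_ncard hsub (Set.toFinite _)
                      omega
                    have hnb' : ∀ r₁ r₁' v, T.Reach p r₁ → T.Reach r₁' r →
                        ¬ T.Barbell r₁ r₁' v := fun r₁ r₁' v ha hb =>
                      hnb r₁ r₁' v ha (T.reach_trans hb hRrq')
                    have hb1 : T.μW (w.take t) p r ≤ Dbound Cr m K s :=
                      ih p r hnb' hcard' (w.take t)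
                    have hb2 : T.μW (seg w t (t+1)) r r' ≤ K :=
                      T.short_le_Kb _ (seg_length_le_one w t) r r'
                    have hb3 : T.μW (w.drop (t+1)) r' q' ≤ 1 :=
                      T.entry_le_one hnc hCond.2.2 _
                    calc T.μW (w.take t) p r *
                        (T.μW (seg w t (t+1)) r r' * T.μW (w.drop (t+1)) r' q')
                        ≤ Dbound Cr m K s * (K * 1) :=
                          Nat.mul_le_mul hb1 (Nat.mul_le_mul hb2 hb3)
                      _ = Dbound Cr m K s * K := by ring
              _ = m * (Dbound Cr m K s * K) := by
                  rw [Finset.sum_const, Finset.card_univ, smul_eq_mul, hm]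
        _ = m * (m * (Dbound Cr m K s * K)) := by
            rw [Finset.sum_const, Finset.card_univ, smul_eq_mul, hm]
    calc T.μW w p q' ≤ ∑ t ∈ Finset.range w.length, inner t := hdec
      _ = ∑ t ∈ X, inner t := hsum.symm
      _ ≤ X.card * (m * (m * (Dbound Cr m K s * K))) := by
          have := Finset.sum_le_card_nsmul X inner (m * (m * (Dbound Cr m K s * K))) hinnerle
          simpa [smul_eq_mul] using this
      _ ≤ Cr * (m * (m * (Dbound Cr m K s * K))) := Nat.mul_le_mul_right _ hXcard
      _ ≤ Dbound Cr m K (s+1) := by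
          rw [Dbound]
          omega


/-- The main polynomial bound: entries into states of height at most `i` grow as
`O(n^i)`. -/
lemma poly_bound [Fintype A] (hnc : ¬ ∃ q v, T.HeavyCycle q v) :
    ∀ i : ℕ, ∃ B : ℕ, 1 ≤ B ∧ ∀ (q q' : T.Q) (w : List A),
      (∀ jj, PathLen T.GEdge q' jj → jj ≤ i) →
      T.μW w q q' ≤ B * (w.length + 1) ^ i := by
  classical
  obtain ⟨Ram, hRam1, hRam⟩ := ramsey_triangle (T.Q → T.Q → Bool)
  set Cr := Fintype.card (T.Q × (T.Q → T.Q → Bool) × (T.Q → T.Q → Bool)) * (Ram - 1) with hCr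
  set m := Fintype.card T.Q with hm
  set K := T.Kb with hK
  set C0 := Dbound Cr m K m with hC0
  have hC01 : 1 ≤ C0 := one_le_Dbound _ _ _ _
  have hK1 : 1 ≤ K := T.one_le_Kb
  have hNB : ∀ p q' : T.Q,
      (∀ r r' v, T.Reach p r → T.Reach r' q' → ¬ T.Barbell r r' v) →
      ∀ w, T.μW w p q' ≤ C0 := by
    intro p q' hnb w
    apply T.no_barbell_bound hnc Ram hRam1 hRam m p q' hnb ?_ w
    calc Set.ncard {x | T.Reach p x ∧ T.Reach x q'}
        ≤ Set.ncard (Set.univ : Set T.Q) :=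
          Set.ncard_le_ncard (Set.subset_univ _) (Set.toFinite _)
      _ = m := by rw [Set.ncard_univ, Nat.card_eq_fintype_card]
  intro i
  induction i with
  | zero =>
    refine ⟨C0, hC01, fun q q' w hle => ?_⟩
    rw [pow_zero, mul_one]
    by_cases hr : T.Reach q q'
    · apply hNB q q' ?_ w
      intro r r' v h1 h2 hb
      have hedge : T.GEdge q q' := T.gedge_of_barbell h1 hb h2
      have := hle 1 (PathLen.succ (PathLen.zero q) hedge)
      omega
    · rw [T.mu_eq_zero_of_not_reach hr w]; omega
  | succ i ih =>
    obtain ⟨B', hB'1, hB'⟩ := ih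
    refine ⟨B' + C0 + m * m * K * C0 * B', by omega, fun q q' w hle => ?_⟩
    set n := w.length with hn
    have hpow1 : 1 ≤ (n + 1) ^ (i + 1) := Nat.one_le_pow _ _ (by omega)
    by_cases hr : T.Reach q q'
    swap
    · rw [T.mu_eq_zero_of_not_reach hr w]; exact Nat.zero_le _
    by_cases hp : PathLen T.GEdge q' (i + 1)
    swap
    · -- height at most i
      have hle' : ∀ jj, PathLen T.GEdge q' jj → jj ≤ i := by
        intro jj hjj
        have := hle jj hjj
        rcases Nat.lt_or_ge jj (i+1) with h | h
        · omega
        · exfalso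
          have hji : jj = i + 1 := by omega
          exact hp (hji ▸ hjj)
      calc T.μW w q q' ≤ B' * (n + 1) ^ i := hB' q q' w hle'
        _ ≤ B' * (n + 1) ^ (i + 1) :=
            Nat.mul_le_mul_left _ (Nat.pow_le_pow_right (by omega) (by omega))
        _ ≤ (B' + C0 + m * m * K * C0 * B') * (n + 1) ^ (i + 1) :=
            Nat.mul_le_mul_right _ (by omega)
    -- q' has height exactly i+1
    set D : T.Q → Prop := fun x => T.Reach x q' ∧ PathLen T.GEdge x (i + 1) with hD
    have hnoedge : ∀ x : T.Q, PathLen T.GEdge x (i+1) → T.Reach x q' →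
        ∀ r r' v, T.Reach x r → T.Reach r' q' → ¬ T.Barbell r r' v := by
      intro x hx hxq' r r' v h1 h2 hb
      have hedge : T.GEdge x q' := T.gedge_of_barbell h1 hb h2
      have := hle (i + 2) (PathLen.succ hx hedge)
      omega
    by_cases hq : D q
    · -- q itself is in D: no barbells at all between q and q'
      calc T.μW w q q' ≤ C0 := hNB q q' (hnoedge q hq.2 hq.1) w
        _ ≤ (B' + C0 + m * m * K * C0 * B') * (n + 1) ^ (i + 1) := by
            calc C0 ≤ (B' + C0 + m * m * K * C0 * B') := by omega
              _ = (B' + C0 + m * m * K * C0 * B') * 1 := by ring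
              _ ≤ _ := Nat.mul_le_mul_left _ hpow1
    · have hq'D : D q' := ⟨T.reach_refl q', hp⟩
      have hdec := T.first_entry D w q q' hq hq'D
      have hterm : ∀ t ∈ Finset.range n, ∀ r r' : T.Q,
          (if ¬ D r ∧ D r' then T.μW (w.take t) q r *
            (T.μW (seg w t (t+1)) r r' * T.μW (w.drop (t+1)) r' q') else 0)
          ≤ (B' * (n + 1) ^ i) * (K * C0) := by
        intro t ht r r'
        have htn : t < n := Finset.mem_range.mp ht
        split
        case isFalse => exact Nat.zero_le _
        case isTrue hCond =>
          rcases Nat.eq_zero_or_pos (T.μW (w.take t) q r) with h3 | h3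
          · rw [h3, zero_mul]; exact Nat.zero_le _
          rcases Nat.eq_zero_or_pos (T.μW (seg w t (t+1)) r r') with h4 | h4
          · rw [h4, zero_mul, mul_zero]; exact Nat.zero_le _
          have hRrq' : T.Reach r q' := T.reach_trans ⟨_, h4⟩ hCond.2.1
          have hler : ∀ jj, PathLen T.GEdge r jj → jj ≤ i := by
            intro jj hjj
            have h5 := hle jj (T.pathlen_of_reach hjj hRrq')
            rcases Nat.lt_or_ge jj (i+1) with h | h
            · omega
            · exfalso
              have hji : jj = i + 1 := by omega
              exact hCond.1 ⟨hRrq', hji ▸ hjj⟩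
          have hb1 : T.μW (w.take t) q r ≤ B' * (n + 1) ^ i := by
            calc T.μW (w.take t) q r ≤ B' * ((w.take t).length + 1) ^ i :=
                  hB' q r (w.take t) hler
              _ ≤ B' * (n + 1) ^ i := by
                  apply Nat.mul_le_mul_left
                  apply Nat.pow_le_pow_left
                  have h6 := List.length_take_le t w
                  omega
          have hb2 : T.μW (seg w t (t+1)) r r' ≤ K :=
            T.short_le_Kb _ (seg_length_le_one w t) r r'
          have hb3 : T.μW (w.drop (t+1)) r' q' ≤ C0 :=
            hNB r' q' (hnoedge r' hCond.2.2 hCond.2.1) _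
          exact Nat.mul_le_mul hb1 (Nat.mul_le_mul hb2 hb3)
      calc T.μW w q q' ≤ ∑ t ∈ Finset.range n, ∑ r : T.Q, ∑ r' : T.Q,
            (if ¬ D r ∧ D r' then T.μW (w.take t) q r *
              (T.μW (seg w t (t+1)) r r' * T.μW (w.drop (t+1)) r' q') else 0) := hdec
        _ ≤ ∑ t ∈ Finset.range n, ∑ r : T.Q, ∑ r' : T.Q,
            ((B' * (n + 1) ^ i) * (K * C0)) := by
            apply Finset.sum_le_sum
            intro t ht
            apply Finset.sum_le_sum
            intro r _
            apply Finset.sum_le_sum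
            intro r' _
            exact hterm t ht r r'
        _ = n * (m * (m * ((B' * (n + 1) ^ i) * (K * C0)))) := by
            simp [Finset.sum_const, Finset.card_univ, smul_eq_mul, hm, mul_assoc]
        _ = (m * m * K * C0 * B') * (n * (n + 1) ^ i) := by ring
        _ ≤ (m * m * K * C0 * B') * ((n + 1) * (n + 1) ^ i) :=
            Nat.mul_le_mul_left _ (Nat.mul_le_mul_right _ (by omega))
        _ = (m * m * K * C0 * B') * (n + 1) ^ (i + 1) := by ring
        _ ≤ (B' + C0 + m * m * K * C0 * B') * (n + 1) ^ (i + 1) :=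
            Nat.mul_le_mul_right _ (by omega)

end NAut

theorem stmt14 {A : Type} [Fintype A] (T : NAut A) (hT : T.Trim)
    (h : ¬ ∃ q v, T.HeavyCycle q v) :
    ∀ i : ℕ, ∃ Bi Ci : ℕ, ∀ (q q' : T.Q) (w : List A),
      (∃ j ≤ i, HeightIs T.GEdge q j) → (∃ j ≤ i, HeightIs T.GEdge q' j) →
      T.μW w q q' ≤ Bi * w.length ^ i + Ci := by
  intro i
  obtain ⟨B, hB1, hB⟩ := T.poly_bound h i
  refine ⟨B * 2 ^ i, B, fun q q' w _ hq' => ?_⟩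
  obtain ⟨j, hji, hHj⟩ := hq'
  have hle : ∀ jj, PathLen T.GEdge q' jj → jj ≤ i := fun jj hjj =>
    le_trans (hHj.2 jj hjj) hji
  have h0 := hB q q' w hle
  rcases Nat.eq_zero_or_pos w.length with hn | hn
  · rw [hn] at h0
    simp only [Nat.zero_add, one_pow, mul_one] at h0
    omega
  · calc T.μW w q q' ≤ B * (w.length + 1) ^ i := h0
      _ ≤ B * (2 * w.length) ^ i :=
          Nat.mul_le_mul_left _ (Nat.pow_le_pow_left (by omega) _)
      _ = B * 2 ^ i * w.length ^ i := by rw [mul_pow]; ring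
      _ ≤ B * 2 ^ i * w.length ^ i + B := Nat.le_add_right _ _
end

section
/- Let f : A* → B* be a partial function computed by a k-marble transducer. Then |f(w)| = O(|w|^{k+1}). -/
set_option autoImplicit false

/-!
A configuration reachable on an input of length `n` has its head and its at most `k` marbles
at positions `≤ n + 1`, so there are `O(n^(k+1))` such configurations. A run through them that
visits some configuration twice can be shortened by cutting out the loop, so the accepting
configuration is also reached by a run visiting each configuration at most once. Since the
accepting run is unique, its output is that of the short run, hence of length `O(n^(k+1))`.
-/

section LabelledRun

variable {α β : Type*} (R : α → List β → α → Prop)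

/-- A run of `R` is recorded by the list of (source, label) pairs of its steps. -/
def IsRun : α → List (α × List β) → α → Prop
  | a, [], b => a = b
  | a, s :: tr, b => s.1 = a ∧ ∃ c, R a s.2 c ∧ IsRun c tr b

variable {R}

theorem isRun_append {t₁ t₂ : List (α × List β)} {a b : α} :
    IsRun R a (t₁ ++ t₂) b ↔ ∃ c, IsRun R a t₁ c ∧ IsRun R c t₂ b := by
  induction t₁ generalizing a with
  | nil => simp [IsRun]
  | cons s t ih => simp only [List.cons_append, IsRun, ih]; aesop

theorem IsRun.exists_isRun_of_mem {tr : List (α × List β)} {a b : α} {s : α × List β}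
    (h : IsRun R a tr b) (hs : s ∈ tr) : ∃ t, IsRun R a t s.1 := by
  obtain ⟨t₁, t₂, rfl⟩ := List.append_of_mem hs
  obtain ⟨c, h₁, hsrc, -⟩ := isRun_append.mp h
  exact ⟨t₁, hsrc ▸ h₁⟩

theorem IsRun.exists_nodup {tr : List (α × List β)} {a b : α} (h : IsRun R a tr b) :
    ∃ tr', IsRun R a tr' b ∧ (tr'.map Prod.fst).Nodup := by
  induction tr generalizing a with
  | nil => exact ⟨[], h, List.nodup_nil⟩
  | cons s t ih =>
    obtain ⟨rfl, c, hstep, hrun⟩ := h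
    obtain ⟨t', hrun', hnodup⟩ := ih hrun
    by_cases hmem : s.1 ∈ t'.map Prod.fst
    · -- the loop from `s.1` back to itself is cut out
      obtain ⟨s', hs', hsrc⟩ := List.mem_map.mp hmem
      obtain ⟨t₁, t₂, rfl⟩ := List.append_of_mem hs'
      obtain ⟨d, -, hsuffix⟩ := isRun_append.mp hrun'
      refine ⟨s' :: t₂, hsrc ▸ hsuffix.1 ▸ hsuffix, ?_⟩
      simp only [List.map_append, List.map_cons] at hnodup
      exact (List.nodup_append.mp hnodup).2.1
    · exact ⟨s :: t', ⟨rfl, c, hstep, hrun'⟩, List.nodup_cons.mpr ⟨hmem, hnodup⟩⟩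

theorem IsRun.length_flatMap_le {tr : List (α × List β)} {a b : α} {M : ℕ}
    (hM : ∀ a v b, R a v b → v.length ≤ M) (h : IsRun R a tr b) :
    (tr.flatMap Prod.snd).length ≤ M * tr.length := by
  induction tr generalizing a with
  | nil => simp
  | cons s t ih =>
    obtain ⟨rfl, c, hstep, hrun⟩ := h
    simp only [List.flatMap_cons, List.length_append, List.length_cons]
    linarith [hM _ _ _ hstep, ih hrun]

end LabelledRun

instance {A : Type} [Finite A] : Finite (TapeSym A) :=
  Finite.of_surjective
    (fun x : Option (Option A) => x.elim .lend (Option.elim · .rend .letter))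
    (by rintro (_ | _ | a)
        exacts [⟨none, rfl⟩, ⟨some none, rfl⟩, ⟨some (some a), rfl⟩])

namespace MarbleT

variable {A B : Type} (T : MarbleT A B) (w : List A)

inductive Step :
    T.Q × ℕ × List (T.C × ℕ) → List B → T.Q × ℕ × List (T.C × ℕ) → Prop
  | left {q : T.Q} {m : ℕ} {π : List (T.C × ℕ)} {q' : T.Q} {v : List B} :
      T.trans q (tapeAt w m) (marbleAt m π) = some ((q', MAct.left), v) → 1 ≤ m →
      Step (q, m, π) v (q', m - 1, π)
  | right {q : T.Q} {m : ℕ} {π : List (T.C × ℕ)} {q' : T.Q} {v : List B} :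
      marbleAt m π = none → T.trans q (tapeAt w m) none = some ((q', MAct.right), v) →
      m ≤ w.length → Step (q, m, π) v (q', m + 1, π)
  | lift {q : T.Q} {m : ℕ} {π : List (T.C × ℕ)} {q' : T.Q} {c : T.C} {v : List B} :
      T.trans q (tapeAt w m) (some c) = some ((q', MAct.lift), v) →
      Step (q, m, (c, m) :: π) v (q', m, π)
  | drop {q : T.Q} {m : ℕ} {π : List (T.C × ℕ)} {q' : T.Q} {c : T.C} {v : List B} :
      marbleAt m π = none → T.trans q (tapeAt w m) none = some ((q', MAct.drop c), v) →
      Step (q, m, π) v (q', m, (c, m) :: π)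

variable {T w}

theorem Steps.head {c c' c'' : T.Q × ℕ × List (T.C × ℕ)} {v u : List B}
    (h : T.Step w c v c') (h' : T.Steps w c' u c'') : T.Steps w c (v ++ u) c'' := by
  cases h with
  | left ht hm => exact .stepL ht hm h'
  | right hn ht hm => exact .stepR hn ht hm h'
  | lift ht => exact .stepLift ht h'
  | drop hn ht => exact .stepDrop hn ht h'

theorem steps_iff_exists_isRun {c c' : T.Q × ℕ × List (T.C × ℕ)} {v : List B} :
    T.Steps w c v c' ↔ ∃ tr, IsRun (T.Step w) c tr c' ∧ v = tr.flatMap Prod.snd := by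
  constructor
  · intro h
    induction h with
    | refl c => exact ⟨[], rfl, rfl⟩
    | stepL ht hm _ ih
    | stepR _ ht hm _ ih
    | stepLift ht _ ih
    | stepDrop _ ht _ ih =>
      obtain ⟨tr, hrun, rfl⟩ := ih
      refine ⟨(_, _) :: tr, ⟨rfl, _, ?_, hrun⟩, rfl⟩
      first
        | exact .left ht hm
        | exact .right ‹_› ht hm
        | exact .lift ht
        | exact .drop ‹_› ht
  · rintro ⟨tr, hrun, rfl⟩
    induction tr generalizing c with
    | nil => exact hrun ▸ .refl c
    | cons s t ih =>
      obtain ⟨rfl, c'', hstep, hrun⟩ := hrun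
      exact Steps.head hstep (ih hrun)

variable (T) in
theorem exists_output_length_le [Finite A] :
    ∃ M, ∀ q s oc p, T.trans q s oc = some p → p.2.length ≤ M := by
  obtain ⟨M, hM⟩ := Finite.exists_le fun x : T.Q × TapeSym A × Option T.C =>
    ((T.trans x.1 x.2.1 x.2.2).map fun p => p.2.length).getD 0
  exact ⟨M, fun q s oc p h => by simpa [h] using hM (q, s, oc)⟩

theorem Step.length_le {M : ℕ} (hM : ∀ q s oc p, T.trans q s oc = some p → p.2.length ≤ M)
    {c c' : T.Q × ℕ × List (T.C × ℕ)} {v : List B} (h : T.Step w c v c') :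
    v.length ≤ M := by
  cases h with
  | left ht | right _ ht | lift ht | drop _ ht => exact hM _ _ _ _ ht

end MarbleT

def CfgInBounds {Q C : Type} (n : ℕ) (c : Q × ℕ × List (C × ℕ)) : Prop :=
  c.2.1 ≤ n + 1 ∧ ∀ p ∈ c.2.2, p.2 ≤ n + 1

theorem MarbleT.Steps.cfgInBounds {A B : Type} {T : MarbleT A B} {w : List A}
    {c c' : T.Q × ℕ × List (T.C × ℕ)} {v : List B} (h : T.Steps w c v c')
    (hc : CfgInBounds w.length c) : CfgInBounds w.length c' := by
  induction h with
  | refl => exact hc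
  | stepL _ _ _ ih => exact ih ⟨by have := hc.1; dsimp only at this ⊢; omega, hc.2⟩
  | stepR _ _ hm _ ih => exact ih ⟨by dsimp only; omega, hc.2⟩
  | stepLift _ _ ih => exact ih ⟨hc.1, fun p hp => hc.2 p (List.mem_cons_of_mem _ hp)⟩
  | stepDrop _ _ _ ih =>
    exact ih ⟨hc.1, by
      rintro p (_ | ⟨_, hp⟩)
      exacts [hc.1, hc.2 p hp]⟩

def cfgCode {Q C : Type} (n k : ℕ) (c : Q × ℕ × List (C × ℕ)) :
    Q × Fin (n + 2) × (Fin k → Option (C × Fin (n + 2))) :=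
  (c.1, ⟨min c.2.1 (n + 1), by omega⟩,
    fun i => (c.2.2.map fun p => (p.1, (⟨min p.2 (n + 1), by omega⟩ : Fin (n + 2))))[i]?)

theorem List.eq_of_getElem?_eq_of_length_le {α : Type*} {l l' : List α} {k : ℕ}
    (hl : l.length ≤ k) (hl' : l'.length ≤ k) (h : ∀ i : Fin k, l[i]? = l'[i]?) : l = l' :=
  List.ext_getElem? fun i => if hi : i < k then h ⟨i, hi⟩ else by
    rw [List.getElem?_eq_none (by omega), List.getElem?_eq_none (by omega)]

theorem cfgCode_injOn {Q C : Type} (n k : ℕ) :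
    Set.InjOn (cfgCode (Q := Q) (C := C) n k)
      {c | CfgInBounds n c ∧ c.2.2.length ≤ k} := by
  rintro ⟨q, m, π⟩ ⟨⟨hm, hπ⟩, hk⟩ ⟨q', m', π'⟩ ⟨⟨hm', hπ'⟩, hk'⟩ h
  simp only [cfgCode, Prod.mk.injEq, Fin.mk.injEq, min_eq_left hm, min_eq_left hm'] at h
  obtain ⟨rfl, rfl, hcode⟩ := h
  have hmap := List.eq_of_getElem?_eq_of_length_le (by simpa using hk) (by simpa using hk')
    (congrFun hcode)
  -- truncation is the identity on positions `≤ n + 1`, so the marble lists can be read back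
  have hdecode : ∀ ρ : List (C × ℕ), (∀ p ∈ ρ, p.2 ≤ n + 1) →
      (ρ.map fun p => (p.1, (⟨min p.2 (n + 1), by omega⟩ : Fin (n + 2)))).map
        (fun p => (p.1, (p.2 : ℕ))) = ρ := fun ρ hρ => by
    rw [List.map_map]
    exact List.map_congr_left (fun p hp => by simp [min_eq_left (hρ p hp)]) |>.trans
      (List.map_id ρ)
  rw [← hdecode π hπ, ← hdecode π' hπ', hmap]

theorem card_cfgCode_le (Q C : Type) [Fintype Q] [Fintype C] (n k : ℕ) :
    Fintype.card (Q × Fin (n + 2) × (Fin k → Option (C × Fin (n + 2)))) ≤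
      Fintype.card Q * (Fintype.card C + 1) ^ k * (n + 2) ^ (k + 1) := by
  simp only [Fintype.card_prod, Fintype.card_fun, Fintype.card_option, Fintype.card_fin]
  calc Fintype.card Q * ((n + 2) * (Fintype.card C * (n + 2) + 1) ^ k)
      ≤ Fintype.card Q * ((n + 2) * ((Fintype.card C + 1) * (n + 2)) ^ k) := by
        gcongr; nlinarith
    _ = Fintype.card Q * (Fintype.card C + 1) ^ k * (n + 2) ^ (k + 1) := by
        rw [mul_pow, pow_succ]; ring

theorem add_two_pow_le (n k : ℕ) : (n + 2) ^ k ≤ 3 ^ k * (n ^ k + 1) := by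
  rcases Nat.eq_zero_or_pos n with rfl | hn
  · calc (0 + 2) ^ k ≤ 3 ^ k := Nat.pow_le_pow_left (by norm_num) k
      _ ≤ 3 ^ k * (0 ^ k + 1) := Nat.le_mul_of_pos_right _ (Nat.succ_pos _)
  · calc (n + 2) ^ k ≤ (3 * n) ^ k := Nat.pow_le_pow_left (by omega) k
      _ = 3 ^ k * n ^ k := Nat.mul_pow 3 n k
      _ ≤ 3 ^ k * (n ^ k + 1) := by gcongr; omega

theorem MarbleT.IsKMarble.exists_steps_length_le {A B : Type} {T : MarbleT A B} {k : ℕ}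
    (hk : T.IsKMarble k) {M : ℕ} (hM : ∀ q s oc p, T.trans q s oc = some p → p.2.length ≤ M)
    {w : List A} {v : List B} {cf : T.Q × ℕ × List (T.C × ℕ)}
    (h : T.Steps w (T.q0, 0, []) v cf) :
    ∃ v', T.Steps w (T.q0, 0, []) v' cf ∧
      v'.length ≤
        M * (Fintype.card T.Q * (Fintype.card T.C + 1) ^ k * (w.length + 2) ^ (k + 1)) := by
  obtain ⟨tr, hrun, -⟩ := steps_iff_exists_isRun.mp h
  obtain ⟨tr, hrun, hnodup⟩ := hrun.exists_nodup
  have hreach : ∀ s ∈ tr, CfgInBounds w.length s.1 ∧ s.1.2.2.length ≤ k := fun s hs => by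
    obtain ⟨t, ht⟩ := hrun.exists_isRun_of_mem hs
    have hsteps := steps_iff_exists_isRun.mpr ⟨t, ht, rfl⟩
    exact ⟨hsteps.cfgInBounds ⟨by simp, by simp⟩, hk _ _ _ hsteps⟩
  have hlen : tr.length ≤
      Fintype.card T.Q * (Fintype.card T.C + 1) ^ k * (w.length + 2) ^ (k + 1) := by
    have hcodes := hnodup.map_on fun c hc c' hc' heq =>
      cfgCode_injOn w.length k
        (by obtain ⟨s, hs, rfl⟩ := List.mem_map.mp hc; exact hreach s hs)
        (by obtain ⟨s, hs, rfl⟩ := List.mem_map.mp hc'; exact hreach s hs) heq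
    simpa using hcodes.length_le_card.trans (card_cfgCode_le T.Q T.C w.length k)
  exact ⟨_, steps_iff_exists_isRun.mpr ⟨tr, hrun, rfl⟩,
    (hrun.length_flatMap_le fun _ _ _ => MarbleT.Step.length_le hM).trans
      (Nat.mul_le_mul_left M hlen)⟩

theorem stmt19_general {A B : Type} [Fintype A] (T : MarbleT A B) (k : ℕ)
    (hk : T.IsKMarble k) (f : List A → Option (List B)) (hf : T.Computes f) :
    ∃ C : ℕ, ∀ w v, f w = some v → v.length ≤ C * w.length ^ (k + 1) + C := by
  obtain ⟨M, hM⟩ := T.exists_output_length_le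
  refine ⟨M * (Fintype.card T.Q * (Fintype.card T.C + 1) ^ k * 3 ^ (k + 1)), fun w v hfv => ?_⟩
  obtain ⟨q, hq, hrun⟩ := (hf w v).mp hfv
  obtain ⟨v', hrun', hlen⟩ := hk.exists_steps_length_le hM hrun
  obtain rfl : v' = v := Option.some.inj (((hf w v').mpr ⟨q, hq, hrun'⟩).symm.trans hfv)
  calc v'.length
      ≤ M * (Fintype.card T.Q * (Fintype.card T.C + 1) ^ k * (w.length + 2) ^ (k + 1)) := hlen
    _ ≤ M * (Fintype.card T.Q * (Fintype.card T.C + 1) ^ k *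
          (3 ^ (k + 1) * (w.length ^ (k + 1) + 1))) := by
        gcongr; exact add_two_pow_le _ _
    _ = _ := by ring

theorem stmt19 {A B : Type} [Fintype A] [Fintype B] (T : MarbleT A B) (k : ℕ)
    (hk : T.IsKMarble k) (f : List A → Option (List B)) (hf : T.Computes f) :
    ∃ C : ℕ, ∀ w v, f w = some v → v.length ≤ C * w.length ^ (k + 1) + C :=
  stmt19_general T k hk f hf
end
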